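/- For every d ∈ ℝ^n there exists δ > 0 such that for all d′ ∈ ℝ^n with ‖d′ − d‖ < δ: (i) K(d′) ⊆ K(d) and hence H(d′) ⊆ H(d); and (ii) Π_C(d′) − Π_C(d) − H(d′ − d) = 0 for every H ∈ H(d′). -/

import Mathlib

open Matrix

/-- The matrix `B` with `(Bx)_i = x_i − x_{i+1}` for `1 ≤ i ≤ n−1` and `(Bx)_n = x_n`. -/
def Bmat (n : ℕ) : Matrix (Fin n) (Fin n) ℝ :=
  Matrix.of fun i j => if j = i then 1 else if (j : ℕ) = (i : ℕ) + 1 then -1 else 0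

/-- `B_Γ`, the submatrix of `B` formed by the rows indexed by `Γ`. -/
def subRows {n : ℕ} (Γ : Finset (Fin n)) : Matrix {i // i ∈ Γ} (Fin n) ℝ :=
  Matrix.of fun i j => Bmat n i.1 j

/-- `H = I_n − B_Γᵀ (B_Γ B_Γᵀ)⁻¹ B_Γ`, the orthogonal projection onto the null space of
`B_Γ` (equal to `I_n` when `Γ = ∅`). -/
noncomputable def Hmat {n : ℕ} (Γ : Finset (Fin n)) : Matrix (Fin n) (Fin n) ℝ :=
  1 - (subRows Γ)ᵀ * (subRows Γ * (subRows Γ)ᵀ)⁻¹ * subRows Γ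

/-- The monotone nonnegative cone `C = {x : x₁ ≥ x₂ ≥ … ≥ xₙ ≥ 0}`. -/
def coneC (n : ℕ) : Set (Fin n → ℝ) :=
  {x | (∀ i j : Fin n, i ≤ j → x j ≤ x i) ∧ ∀ i, 0 ≤ x i}

/-- `Pc` is the Euclidean (metric) projection onto the cone `C`:
`Pc d` minimizes `½‖x − d‖²` over `x ∈ C`. -/
def IsProjC {n : ℕ} (Pc : (Fin n → ℝ) → Fin n → ℝ) : Prop :=
  ∀ d : Fin n → ℝ, Pc d ∈ coneC n ∧
    ∀ x ∈ coneC n, (1/2) * ∑ i, (Pc d i - d i)^2 ≤ (1/2) * ∑ i, (x i - d i)^2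

/-- `z(d) = (Bᵀ)⁻¹(d − Π_C(d))`. -/
noncomputable def zdual {n : ℕ} (Pc : (Fin n → ℝ) → Fin n → ℝ) (d : Fin n → ℝ) :
    Fin n → ℝ :=
  Matrix.mulVec ((Bmat n)ᵀ)⁻¹ (d - Pc d)

/-- `K(d) = {Γ : Supp(z(d)) ⊆ Γ ⊆ I(Π_C(d))}`. -/
def Kset {n : ℕ} (Pc : (Fin n → ℝ) → Fin n → ℝ) (d : Fin n → ℝ) :
    Set (Finset (Fin n)) :=
  {Γ | (∀ i, zdual Pc d i ≠ 0 → i ∈ Γ) ∧ ∀ i ∈ Γ, (Bmat n).mulVec (Pc d) i = 0}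

/-- `H(d) = {I_n − B_Γᵀ(B_Γ B_Γᵀ)⁻¹ B_Γ : Γ ∈ K(d)}`, the HS-Jacobian of `Π_C` at `d`. -/
def Hset {n : ℕ} (Pc : (Fin n → ℝ) → Fin n → ℝ) (d : Fin n → ℝ) :
    Set (Matrix (Fin n) (Fin n) ℝ) :=
  {H | ∃ Γ ∈ Kset Pc d, H = Hmat Γ}

/-- `M(y) = {λᵀHλ : H ∈ H(yλ + b)}`. -/
def Mset {n : ℕ} (Pc : (Fin n → ℝ) → Fin n → ℝ) (lam b : Fin n → ℝ) (y : ℝ) : Set ℝ :=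
  {m | ∃ H ∈ Hset Pc (y • lam + b), m = dotProduct lam (H.mulVec lam)}

/-- The dual objective `φ(y) = ½‖Π_C(yλ + b)‖² − yτ − ½‖b‖²`. -/
noncomputable def phiFun {n : ℕ} (Pc : (Fin n → ℝ) → Fin n → ℝ) (lam b : Fin n → ℝ)
    (τ : ℝ) : ℝ → ℝ :=
  fun y => (1/2) * ∑ i, (Pc (y • lam + b) i)^2 - y * τ - (1/2) * ∑ i, (b i)^2

/-- `ψ(y) = ⟨Π_C(yλ + b), λ⟩ − τ` (the derivative `φ′` of the dual objective). -/
noncomputable def psiFun {n : ℕ} (Pc : (Fin n → ℝ) → Fin n → ℝ) (lam b : Fin n → ℝ)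
    (τ : ℝ) : ℝ → ℝ :=
  fun y => (∑ i, Pc (y • lam + b) i * lam i) - τ

/-- The Euclidean norm on `ℝⁿ`. -/
noncomputable def euclNorm {n : ℕ} (x : Fin n → ℝ) : ℝ :=
  Real.sqrt (∑ i, (x i)^2)

/-! Writing `d = Π_C(d) + Bᵀ z(d)`, every `Γ ∈ K(d)` has `B_Γ Π_C(d) = 0` and `Bᵀ z(d)` in the
range of `B_Γᵀ`, so the orthogonal projector `H_Γ` onto `ker B_Γ` maps `d` to `Π_C(d)`.
Since `Π_C` is nonexpansive, `z` and `B Π_C` are continuous, so near `d` their supports can only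
grow; this shrinks `K`, and then every `H_Γ ∈ H(d')` maps `d'` and `d` to their projections. -/

open Filter Topology Function

lemma Convex.lipschitzWith_one_of_nearest_point {F : Type*} [NormedAddCommGroup F]
    [InnerProductSpace ℝ F] {K : Set F} (hK : Convex ℝ K) {P : F → F} (hPK : ∀ u, P u ∈ K)
    (hmin : ∀ u, ∀ w ∈ K, ‖u - P u‖ ≤ ‖u - w‖) : LipschitzWith 1 P := by
  have hvi : ∀ u, ∀ w ∈ K, inner ℝ (u - P u) (w - P u) ≤ 0 := by
    intro u
    have : Nonempty K := ⟨⟨P u, hPK u⟩⟩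
    refine (norm_eq_iInf_iff_real_inner_le_zero hK (hPK u)).1 (le_antisymm
      (le_ciInf fun w => hmin u w w.2)
      (ciInf_le (f := fun w : K => ‖u - w‖) ⟨0, ?_⟩ ⟨P u, hPK u⟩))
    rintro _ ⟨w, rfl⟩
    exact norm_nonneg _
  refine LipschitzWith.of_dist_le_mul fun u v => ?_
  rw [NNReal.coe_one, one_mul, dist_eq_norm, dist_eq_norm]
  have hsplit : inner ℝ (u - v) (P u - P v) = ‖P u - P v‖ ^ 2
      - inner ℝ (u - P u) (P v - P u) - inner ℝ (v - P v) (P u - P v) := by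
    rw [← real_inner_self_eq_norm_sq, ← neg_sub (P u) (P v), inner_neg_right, sub_neg_eq_add,
      ← inner_add_left, ← inner_sub_left]
    congr 1
    abel
  have hsq : ‖P u - P v‖ ^ 2 ≤ ‖u - v‖ * ‖P u - P v‖ := calc
    ‖P u - P v‖ ^ 2 ≤ inner ℝ (u - v) (P u - P v) := by
      linarith [hvi u (P v) (hPK v), hvi v (P u) (hPK u)]
    _ ≤ ‖u - v‖ * ‖P u - P v‖ := real_inner_le_norm _ _
  nlinarith [norm_nonneg (P u - P v), norm_nonneg (u - v)]

lemma euclNorm_eq_norm {n : ℕ} (x : Fin n → ℝ) :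
    euclNorm x = ‖(WithLp.toLp 2 x : EuclideanSpace ℝ (Fin n))‖ := by
  simp [euclNorm, EuclideanSpace.norm_eq]

lemma norm_le_euclNorm {n : ℕ} (x : Fin n → ℝ) : ‖x‖ ≤ euclNorm x := by
  rw [euclNorm_eq_norm]
  exact (pi_norm_le_iff_of_nonneg (norm_nonneg _)).2 fun i =>
    PiLp.norm_apply_le (WithLp.toLp 2 x) i

lemma convex_coneC (n : ℕ) : Convex ℝ (coneC n) := by
  rintro x ⟨hx_anti, hx_nonneg⟩ y ⟨hy_anti, hy_nonneg⟩ a b ha hb -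
  refine ⟨fun i j hij => ?_, fun i => ?_⟩
  · simp only [Pi.add_apply, Pi.smul_apply, smul_eq_mul]
    gcongr <;> solve_by_elim
  · simp only [Pi.add_apply, Pi.smul_apply, smul_eq_mul]
    have := hx_nonneg i
    have := hy_nonneg i
    positivity

lemma IsProjC.euclNorm_sub_le {n : ℕ} {Pc : (Fin n → ℝ) → Fin n → ℝ} (hPc : IsProjC Pc)
    (d : Fin n → ℝ) {x : Fin n → ℝ} (hx : x ∈ coneC n) :
    euclNorm (Pc d - d) ≤ euclNorm (x - d) :=
  Real.sqrt_le_sqrt (by simpa using (hPc d).2 x hx)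

/-- `Fin n → ℝ` carries the sup norm, so nonexpansiveness is stated on `EuclideanSpace`. -/
lemma IsProjC.lipschitzWith {n : ℕ} {Pc : (Fin n → ℝ) → Fin n → ℝ} (hPc : IsProjC Pc) :
    LipschitzWith 1 (fun u : EuclideanSpace ℝ (Fin n) => WithLp.toLp 2 (Pc u.ofLp)) := by
  refine ((convex_coneC n).linear_preimage (WithLp.linearEquiv 2 ℝ (Fin n → ℝ)).toLinearMap)
    |>.lipschitzWith_one_of_nearest_point (fun u => (hPc u.ofLp).1) fun u w hw => ?_
  rw [norm_sub_rev, norm_sub_rev u, ← euclNorm_eq_norm, ← euclNorm_eq_norm]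
  exact hPc.euclNorm_sub_le u.ofLp hw

lemma IsProjC.continuous {n : ℕ} {Pc : (Fin n → ℝ) → Fin n → ℝ} (hPc : IsProjC Pc) :
    Continuous Pc :=
  (PiLp.continuous_ofLp 2 _).comp <| hPc.lipschitzWith.continuous.comp (PiLp.continuous_toLp 2 _)

lemma det_Bmat (n : ℕ) : (Bmat n).det = 1 := by
  have hupper : (Bmat n).IsUpperTriangular := by
    intro i j (hji : j < i)
    simp only [Bmat, of_apply, if_neg hji.ne, if_neg (by omega : (j : ℕ) ≠ i + 1)]
  rw [det_of_isUpperTriangular hupper]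
  simp [Bmat]

lemma isUnit_Bmat (n : ℕ) : IsUnit (Bmat n) :=
  (isUnit_iff_isUnit_det _).2 (by simp [det_Bmat])

lemma transpose_Bmat_mulVec_zdual {n : ℕ} (Pc : (Fin n → ℝ) → Fin n → ℝ) (d : Fin n → ℝ) :
    (Bmat n)ᵀ *ᵥ zdual Pc d = d - Pc d := by
  rw [zdual, mulVec_mulVec, mul_nonsing_inv _ (by simp [det_Bmat]), one_mulVec]

lemma isUnit_mul_transpose_of_linearIndependent_row {m k : Type*} [Fintype m] [Fintype k]
    [DecidableEq m] {A : Matrix m k ℝ} (h : LinearIndependent ℝ A.row) : IsUnit (A * Aᵀ) := by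
  rw [← mulVec_injective_iff_isUnit, ← coe_mulVecLin, ← LinearMap.ker_eq_bot,
    LinearMap.ker_eq_bot']
  intro v hv
  have hvA : v ᵥ* A = 0 := by
    rw [mulVecLin_apply, ← conjTranspose_eq_transpose_of_trivial,
      self_mul_conjTranspose_mulVec_eq_zero, conjTranspose_eq_transpose_of_trivial,
      mulVec_transpose] at hv
    exact hv
  exact vecMul_injective_iff.2 h (hvA.trans (zero_vecMul A).symm)

lemma isUnit_subRows_mul_transpose {n : ℕ} (Γ : Finset (Fin n)) :
    IsUnit (subRows Γ * (subRows Γ)ᵀ) :=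
  isUnit_mul_transpose_of_linearIndependent_row <|
    (linearIndependent_rows_of_isUnit (isUnit_Bmat n)).comp _ Subtype.val_injective

lemma Hmat_mulVec_of_subRows_mulVec_eq_zero {n : ℕ} {Γ : Finset (Fin n)} {x : Fin n → ℝ}
    (hx : subRows Γ *ᵥ x = 0) : Hmat Γ *ᵥ x = x := by
  rw [Hmat, sub_mulVec, one_mulVec, ← mulVec_mulVec, hx, mulVec_zero, sub_zero]

lemma Hmat_mul_transpose_subRows {n : ℕ} (Γ : Finset (Fin n)) :
    Hmat Γ * (subRows Γ)ᵀ = 0 := by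
  rw [Hmat, Matrix.sub_mul, Matrix.one_mul, Matrix.mul_assoc, nonsing_inv_mul_cancel_right _ _
    ((isUnit_iff_isUnit_det _).1 (isUnit_subRows_mul_transpose Γ)), sub_self]

lemma transpose_Bmat_mulVec_of_support_subset {n : ℕ} {Γ : Finset (Fin n)} {z : Fin n → ℝ}
    (hz : support z ⊆ Γ) : (Bmat n)ᵀ *ᵥ z = (subRows Γ)ᵀ *ᵥ fun i => z i := by
  rw [mulVec_transpose, mulVec_transpose, vecMul_eq_sum, vecMul_eq_sum,
    ← Finset.sum_subset (Finset.subset_univ Γ) fun i _ hi => by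
      rw [notMem_support.1 fun h => hi (hz h), zero_smul],
    ← Finset.sum_coe_sort Γ]
  rfl

lemma Hmat_mulVec_of_mem_Kset {n : ℕ} {Pc : (Fin n → ℝ) → Fin n → ℝ} {d : Fin n → ℝ}
    {Γ : Finset (Fin n)} (hΓ : Γ ∈ Kset Pc d) : Hmat Γ *ᵥ d = Pc d := by
  have hker : Hmat Γ *ᵥ Pc d = Pc d :=
    Hmat_mulVec_of_subRows_mulVec_eq_zero (funext fun i => hΓ.2 i i.2)
  have hrange : Hmat Γ *ᵥ (d - Pc d) = 0 := by
    rw [← transpose_Bmat_mulVec_zdual, transpose_Bmat_mulVec_of_support_subset fun i => hΓ.1 i,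
      mulVec_mulVec, Hmat_mul_transpose_subRows, zero_mulVec]
  calc Hmat Γ *ᵥ d = Hmat Γ *ᵥ (d - Pc d) + Hmat Γ *ᵥ Pc d := by
        rw [← mulVec_add, sub_add_cancel]
    _ = Pc d := by rw [hrange, hker, zero_add]

lemma eventually_support_subset {X ι M : Type*} [TopologicalSpace X] [Finite ι]
    [TopologicalSpace M] [T1Space M] [Zero M] {f : X → ι → M} {x : X} (hf : ContinuousAt f x) :
    ∀ᶠ y in 𝓝 x, support (f x) ⊆ support (f y) := by
  refine eventually_all.2 fun i => ?_
  by_cases hi : f x i = 0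
  · exact .of_forall fun y h => absurd hi h
  · exact (((continuous_apply i).continuousAt.comp hf).eventually_ne hi).mono fun y hy _ => hy

lemma Kset_subset_Kset {n : ℕ} {Pc : (Fin n → ℝ) → Fin n → ℝ} {d d' : Fin n → ℝ}
    (hz : support (zdual Pc d) ⊆ support (zdual Pc d'))
    (hB : support (Bmat n *ᵥ Pc d) ⊆ support (Bmat n *ᵥ Pc d')) :
    Kset Pc d' ⊆ Kset Pc d :=
  fun _ hΓ => ⟨fun i hi => hΓ.1 i (hz hi), fun i hi => not_not.1 fun h => hB h (hΓ.2 i hi)⟩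

lemma Hset_subset_Hset {n : ℕ} {Pc : (Fin n → ℝ) → Fin n → ℝ} {d d' : Fin n → ℝ}
    (h : Kset Pc d' ⊆ Kset Pc d) : Hset Pc d' ⊆ Hset Pc d :=
  fun _ ⟨Γ, hΓ, hH⟩ => ⟨Γ, h hΓ, hH⟩

lemma eventually_Kset_subset {n : ℕ} {Pc : (Fin n → ℝ) → Fin n → ℝ} (hPc : Continuous Pc)
    (d : Fin n → ℝ) : ∀ᶠ d' in 𝓝 d, Kset Pc d' ⊆ Kset Pc d := by
  have hz : Continuous (zdual Pc) := continuous_const.matrix_mulVec (continuous_id.sub hPc)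
  have hB : Continuous fun d => Bmat n *ᵥ Pc d := continuous_const.matrix_mulVec hPc
  filter_upwards [eventually_support_subset hz.continuousAt,
    eventually_support_subset hB.continuousAt] with d' using Kset_subset_Kset

theorem stmt9_general {n : ℕ}
    (Pc : (Fin n → ℝ) → Fin n → ℝ) (hPc : IsProjC Pc) (d : Fin n → ℝ) :
    ∃ δ > (0:ℝ), ∀ d' : Fin n → ℝ, euclNorm (d' - d) < δ →
      (Kset Pc d' ⊆ Kset Pc d ∧ Hset Pc d' ⊆ Hset Pc d) ∧
      ∀ H ∈ Hset Pc d', Pc d' - Pc d - H.mulVec (d' - d) = 0 := by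
  obtain ⟨δ, hδ, hK⟩ := Metric.eventually_nhds_iff.1 (eventually_Kset_subset hPc.continuous d)
  refine ⟨δ, hδ, fun d' hd' => ?_⟩
  have hK' : Kset Pc d' ⊆ Kset Pc d :=
    hK ((dist_eq_norm d' d).trans_lt ((norm_le_euclNorm _).trans_lt hd'))
  refine ⟨⟨hK', Hset_subset_Hset hK'⟩, ?_⟩
  rintro _ ⟨Γ, hΓ, rfl⟩
  rw [mulVec_sub, Hmat_mulVec_of_mem_Kset hΓ, Hmat_mulVec_of_mem_Kset (hK' hΓ), sub_self]

/-- for every `d` there is `δ > 0` such that for all `d'` with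
`‖d' − d‖ < δ`: (i) `K(d') ⊆ K(d)` and `H(d') ⊆ H(d)`; and (ii)
`Π_C(d') − Π_C(d) − H(d' − d) = 0` for every `H ∈ H(d')`. -/
theorem stmt9 {n : ℕ} (hn : 0 < n)
    (Pc : (Fin n → ℝ) → Fin n → ℝ) (hPc : IsProjC Pc) (d : Fin n → ℝ) :
    ∃ δ > (0:ℝ), ∀ d' : Fin n → ℝ, euclNorm (d' - d) < δ →
      (Kset Pc d' ⊆ Kset Pc d ∧ Hset Pc d' ⊆ Hset Pc d) ∧
      ∀ H ∈ Hset Pc d', Pc d' - Pc d - H.mulVec (d' - d) = 0 :=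
  stmt9_general Pc hPc d
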